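/- Let q = [q_1, ..., q_l] be a partition of n and let r ∈ (−1/2, 1/2]. Then the multiset obtained by concatenating, over 1 ≤ i ≤ l, the row multisets R_r(q_i) = {r + σt : t ∈ ℤ, −⌊q_i/2⌋ ≤ t ≤ ⌊(q_i − 1)/2⌋} equals the multiset in which, for each j ≥ 1, the number y_j(r) = r + (−1)^{j−1} σ ⌊j/2⌋ occurs with multiplicity c_j, where c_j is the j-th part of the transpose partition q^t (and c_j = 0 for j beyond the length of q^t). Here σ = 1 if r ≥ 0 and σ = −1 if r < 0. -/

import Mathlib

/-!
Enumerate the values `y_1, y_2, y_3, …` through the zigzag `0, -1, 1, -2, 2, …` of ℤ: its first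
`p` terms are exactly `{-⌊p/2⌋, …, ⌊(p-1)/2⌋}`, so the row multiset `R_r(p)` is `{y_1, …, y_p}`.
The theorem is then the double count of the Young diagram of `q`: the cell in column `j` of a row
of length `q_i` exists iff `j ≤ q_i`, so `y_j` occurs once for each row of length at least `j`,
i.e. `c_j` times.
-/

/-- A partition of `N`: a non-increasing list of positive naturals summing to `N`. -/
def IsPartition (N : ℕ) (l : List ℕ) : Prop :=
  l.Pairwise (· ≥ ·) ∧ (∀ p ∈ l, 0 < p) ∧ l.sum = N

/-- The height `h_d(s) = #{j : d_j ≥ s}` (the `s`-th part of the transpose partition). -/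
def height (l : List ℕ) (s : ℕ) : ℕ :=
  (l.filter (fun p => decide (s ≤ p))).length

/-- `σ(r) = 1` if `r ≥ 0` and `σ(r) = −1` if `r < 0`. -/
noncomputable def sgnR (r : ℝ) : ℝ := if 0 ≤ r then 1 else -1

/-- `y_j(r) = r + (−1)^(j−1) · σ · ⌊j/2⌋`, where `σ = 1` if `r ≥ 0` and `σ = −1` if `r < 0`. -/
noncomputable def yval (r : ℝ) (j : ℕ) : ℝ :=
  r + (-1 : ℝ) ^ (j - 1) * sgnR r * ((j / 2 : ℕ) : ℝ)

/-- The row multiset `R_r(q) = {r + σ t : t ∈ ℤ, −⌊q/2⌋ ≤ t ≤ ⌊(q−1)/2⌋}`. -/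
noncomputable def rowMultiset (r : ℝ) (q : ℕ) : Multiset ℝ :=
  ((Finset.Icc (-((q / 2 : ℕ) : ℤ)) (((q - 1) / 2 : ℕ) : ℤ)).val).map
    (fun t => r + sgnR r * (t : ℝ))

def zigzag (j : ℕ) : ℤ :=
  if j % 2 = 0 then (((j + 1) / 2 : ℕ) : ℤ) else -(((j + 1) / 2 : ℕ) : ℤ)

theorem yval_succ (r : ℝ) (j : ℕ) : yval r (j + 1) = r + sgnR r * zigzag j := by
  rcases Nat.even_or_odd j with hj | hj
  · simp [yval, zigzag, hj.neg_one_pow, Nat.even_iff.mp hj, -Int.natCast_ediv]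
  · simp [yval, zigzag, hj.neg_one_pow, Nat.odd_iff.mp hj, -Int.natCast_ediv]

-- At `p = 0` the truncated `0 - 1 = 0` makes the interval `{0}` rather than `∅`.
theorem map_zigzag_range {p : ℕ} (hp : 0 < p) :
    (Multiset.range p).map zigzag
      = (Finset.Icc (-((p / 2 : ℕ) : ℤ)) (((p - 1) / 2 : ℕ) : ℤ)).val := by
  induction p, hp using Nat.le_induction with
  | base => rfl
  | succ p _ ih =>
    have hnew : zigzag p ∉ Finset.Icc (-((p / 2 : ℕ) : ℤ)) (((p - 1) / 2 : ℕ) : ℤ) := by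
      simp only [zigzag, Finset.mem_Icc]
      split_ifs <;> omega
    rw [Multiset.range_succ, Multiset.map_cons, ih, ← Finset.insert_val_of_notMem hnew]
    congr 1
    ext x
    simp only [zigzag, Finset.mem_insert, Finset.mem_Icc]
    split_ifs <;> omega

theorem rowMultiset_eq_map_range (r : ℝ) {p : ℕ} (hp : 0 < p) :
    rowMultiset r p = (Multiset.range p).map fun j => yval r (j + 1) := by
  rw [rowMultiset, ← map_zigzag_range hp]
  simp only [yval_succ, Multiset.pure_def, Multiset.bind_def, Multiset.bind_singleton,
    Multiset.map_map, Function.comp_def]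

theorem height_cons (p : ℕ) (l : List ℕ) (s : ℕ) :
    height (p :: l) s = (if s ≤ p then 1 else 0) + height l s := by
  by_cases h : s ≤ p <;> simp [height, h, add_comm]

theorem height_eq_zero {l : List ℕ} {s : ℕ} (h : ∀ p ∈ l, p < s) : height l s = 0 := by
  simpa [height, List.filter_eq_nil_iff] using h

theorem count_sum_map_range (l : List ℕ) (j : ℕ) :
    ((l.map Multiset.range).sum).count j = height l (j + 1) := by
  induction l with
  | nil => rfl
  | cons p l ih =>
    simp [height_cons, ih, Multiset.count_eq_of_nodup (Multiset.nodup_range p)]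

theorem count_sum_map_replicate_height {l : List ℕ} {m : ℕ} (hl : ∀ p ∈ l, p ≤ m) (j : ℕ) :
    ((List.range m).map fun i => Multiset.replicate (height l (i + 1)) i).sum.count j
      = height l (j + 1) := by
  rw [← Multiset.coe_countAddMonoidHom, map_list_sum, List.map_map,
    List.sum_map_eq_nsmul_single j _ (fun i hij _ => by simp [Multiset.count_replicate, hij]),
    List.count_range]
  simp only [Function.comp_apply, Multiset.coe_countAddMonoidHom, Multiset.count_replicate_self,
    smul_eq_mul, ite_mul, one_mul, zero_mul, ite_eq_left_iff, not_lt]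
  intro hmj
  exact (height_eq_zero fun p hp => by linarith [hl p hp]).symm

theorem sum_map_range_eq_sum_replicate_height {l : List ℕ} {m : ℕ} (hl : ∀ p ∈ l, p ≤ m) :
    (l.map Multiset.range).sum
      = ((List.range m).map fun j => Multiset.replicate (height l (j + 1)) j).sum := by
  ext j
  rw [count_sum_map_range, count_sum_map_replicate_height hl]

theorem sum_map_map_range_eq_sum_replicate_height {α : Type*} (f : ℕ → α) {l : List ℕ} {m : ℕ}
    (hl : ∀ p ∈ l, p ≤ m) :
    (l.map fun p => (Multiset.range p).map f).sum
      = ((List.range m).map fun j => Multiset.replicate (height l (j + 1)) (f j)).sum := by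
  have := congrArg (Multiset.mapAddMonoidHom f) (sum_map_range_eq_sum_replicate_height hl)
  simpa [map_list_sum, Function.comp_def, Multiset.coe_mapAddMonoidHom, Multiset.map_replicate]
    using this

theorem le_headD_of_pairwise_ge {l : List ℕ} (hl : l.Pairwise (· ≥ ·)) :
    ∀ p ∈ l, p ≤ l.headD 0 := by
  cases l with
  | nil => simp
  | cons a l =>
    intro p hp
    rcases List.mem_cons.mp hp with rfl | hp
    · exact le_rfl
    · exact List.rel_of_pairwise_cons hl hp

theorem xi_rows_eq_columns_general (n : ℕ) (q : List ℕ) (hq : IsPartition n q)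
    (r : ℝ) :
    (q.map (fun qi => rowMultiset r qi)).sum
      = ((List.range (q.headD 0)).map
          (fun j => Multiset.replicate (height q (j + 1)) (yval r (j + 1)))).sum := by
  obtain ⟨hsorted, hpos, -⟩ := hq
  rw [← sum_map_map_range_eq_sum_replicate_height (fun j => yval r (j + 1))
    (le_headD_of_pairwise_ge hsorted)]
  exact congrArg List.sum (List.map_congr_left fun p hp => rowMultiset_eq_map_range r (hpos p hp))

/-- Row description of `ξ_r(q)` equals the column description: the concatenation over the
parts `q_i` of the row multisets `R_r(q_i)` is the multiset in which `y_j(r)` occurs with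
multiplicity `c_j`, the `j`-th part of the transpose partition `qᵗ` (zero beyond its length). -/
theorem xi_rows_eq_columns (n : ℕ) (q : List ℕ) (hq : IsPartition n q)
    (r : ℝ) (hr1 : -(1 / 2 : ℝ) < r) (hr2 : r ≤ 1 / 2) :
    (q.map (fun qi => rowMultiset r qi)).sum
      = ((List.range (q.headD 0)).map
          (fun j => Multiset.replicate (height q (j + 1)) (yval r (j + 1)))).sum :=
  xi_rows_eq_columns_general n q hq r
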